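/- Let (s,t) ∈ [0,1]² satisfy g(s)² + g(t)² ≤ 1, and consider the dichotomic POVM on ℂ² with elements M_± = (1/2)·(I ± (g(s)·σ_z + √(1 − g(s)² − g(t)²)·σ_y)). Then M_± are positive semidefinite and sum to I, the noise with respect to σ_z equals N(M, σ_z) = s, and the Lüders disturbance with respect to σ_x, defined as the conditional Shannon entropy H(𝕏|𝕏') of the joint distribution p(b, b') = (1/2)·Σ_± |⟨b'x|√M_±|bx⟩|² (b, b' ∈ {+,−}, |±x⟩ the eigenvectors of σ_x, √M the positive semidefinite square root), equals D_I(M, σ_x) = t. Hence the relation g(N)² + g(D_I)² ≤ 1 for Lüders instruments is tight. -/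

import Mathlib

open Matrix
open scoped ComplexOrder

noncomputable section

/-- The binary-entropy-type function `h(x) = -((1+x)/2)·log₂((1+x)/2) - ((1-x)/2)·log₂((1-x)/2)`
(with the convention `0·log₂ 0 = 0`, automatic since `Real.logb 2 0 = 0`). -/
def hFun (x : ℝ) : ℝ :=
  -(((1 + x) / 2) * Real.logb 2 ((1 + x) / 2)) - ((1 - x) / 2) * Real.logb 2 ((1 - x) / 2)

/-- `g : [0,1] → [0,1]` is the inverse of `h` on `[0,1]`. -/
def gFun : ℝ → ℝ := Function.invFunOn hFun (Set.Icc 0 1)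

/-- The (real) quadratic form `⟨v|M|v⟩`. -/
def qform {d : ℕ} (M : Matrix (Fin d) (Fin d) ℂ) (v : Fin d → ℂ) : ℝ :=
  (star v ⬝ᵥ M.mulVec v).re

/-- `v` is an orthonormal basis (family) of `ℂ^d`. -/
def IsONB {d : ℕ} (v : Fin d → Fin d → ℂ) : Prop :=
  ∀ i j, star (v i) ⬝ᵥ v j = if i = j then 1 else 0

/-- A POVM: a finite family of positive semidefinite matrices summing to the identity. -/
def IsPOVM {d : ℕ} {ι : Type*} [Fintype ι] (M : ι → Matrix (Fin d) (Fin d) ℂ) : Prop :=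
  (∀ m, (M m).PosSemidef) ∧ ∑ m, M m = 1

/-- A density matrix: positive semidefinite with trace 1. -/
def IsDensity {d : ℕ} (ρ : Matrix (Fin d) (Fin d) ℂ) : Prop :=
  ρ.PosSemidef ∧ ρ.trace = 1

/-- The noise `N(M,A) = -Σ_{m,a} p(m,a)·log₂(p(m,a)/p(m))` with `p(m,a) = (1/d)·⟨a|M_m|a⟩`
and `p(m) = (1/d)·Tr[M_m]`, for an observable `A` with orthonormal eigenbasis `v`. -/
def noise {d : ℕ} {ι : Type*} [Fintype ι] (M : ι → Matrix (Fin d) (Fin d) ℂ)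
    (v : Fin d → Fin d → ℂ) : ℝ :=
  -∑ m, ∑ a, ((1 / (d : ℝ)) * qform (M m) (v a)) *
      Real.logb 2 (((1 / (d : ℝ)) * qform (M m) (v a)) / ((1 / (d : ℝ)) * (M m).trace.re))

/-- `H(A|ρ) = -Σ_a ⟨a|ρ|a⟩·log₂⟨a|ρ|a⟩` for an observable with orthonormal eigenbasis `v`. -/
def Hobs {d : ℕ} (v : Fin d → Fin d → ℂ) (ρ : Matrix (Fin d) (Fin d) ℂ) : ℝ :=
  -∑ a, qform ρ (v a) * Real.logb 2 (qform ρ (v a))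

/-- Conditional Shannon entropy `H(X|Y) = -Σ_{x,y} p(x,y)·log₂(p(x,y)/p(y))` of a finite joint
distribution, conditioning on the second variable. -/
def condEnt {X Y : Type*} [Fintype X] [Fintype Y] (p : X → Y → ℝ) : ℝ :=
  -∑ x, ∑ y, p x y * Real.logb 2 (p x y / ∑ x', p x' y)

/-- Pauli matrix σ_x. -/
def σx : Matrix (Fin 2) (Fin 2) ℂ := !![0, 1; 1, 0]
/-- Pauli matrix σ_y. -/
def σy : Matrix (Fin 2) (Fin 2) ℂ := !![0, -Complex.I; Complex.I, 0]
/-- Pauli matrix σ_z. -/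
def σz : Matrix (Fin 2) (Fin 2) ℂ := !![1, 0; 0, -1]

/-- `v·σ = v₁σ_x + v₂σ_y + v₃σ_z` for `v ∈ ℝ³`. -/
def vecσ (v : Fin 3 → ℝ) : Matrix (Fin 2) (Fin 2) ℂ :=
  (v 0 : ℂ) • σx + (v 1 : ℂ) • σy + (v 2 : ℂ) • σz

/-- The canonical orthonormal eigenbasis of σ_z. -/
def basisZ : Fin 2 → Fin 2 → ℂ := fun i j => if i = j then 1 else 0

/-- The canonical orthonormal eigenbasis `|±x⟩` of σ_x. -/
def basisX : Fin 2 → Fin 2 → ℂ := fun i =>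
  ![((1 / Real.sqrt 2 : ℝ) : ℂ),
    if i = 0 then ((1 / Real.sqrt 2 : ℝ) : ℂ) else (-(1 / Real.sqrt 2 : ℝ) : ℂ)]

/-- Eigenvalues `+1, -1` of a (nondegenerate) Pauli observable. -/
def pmEig : Fin 2 → ℂ := fun i => if i = 0 then 1 else -1

/-- The positive semidefinite square root of a positive semidefinite matrix
(the definition `Matrix.PosSemidef.sqrt` of the older Mathlib, since removed). -/
def Matrix.PosSemidef.sqrt {n 𝕜 : Type*} [Fintype n] [DecidableEq n] [RCLike 𝕜]
    {A : Matrix n n 𝕜} (hA : A.PosSemidef) : Matrix n n 𝕜 :=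
  hA.1.eigenvectorUnitary * diagonal (fun i => ((Real.sqrt (hA.1.eigenvalues i) : ℝ) : 𝕜)) *
  (star hA.1.eigenvectorUnitary : Matrix n n 𝕜)

end

/-!
Write `M_± = ½(I ± n·σ)` with `n = (0, √(1 - g(s)² - g(t)²), g(s))`, so `|n|² = 1 - g(t)²`.
Read in the `σ_z` basis, `p(a | m)` is the binary symmetric channel with bias `g(s)`, whose
conditional entropy is `h(g(s)) = s`. For the Lüders instrument, `M_±` has trace `1` and
determinant `g(t)²/4`, so its square root is `(M_± + (g(t)/2)·I) / √(1 + g(t))` (the formula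
`√M = (M + √(det M)·I) / √(tr M + 2√(det M))` for `2 × 2` matrices). Its matrix elements in the
`σ_x` basis form the binary symmetric channel with bias `g(t)`, of conditional entropy `t`.
-/

lemma continuous_hFun : Continuous hFun := by
  have key : ∀ f : ℝ → ℝ, Continuous f → Continuous (fun x => f x * Real.logb 2 (f x)) := by
    intro f hf
    simpa [Real.logb, mul_div_assoc] using (Real.continuous_mul_log.comp hf).div_const (Real.log 2)
  exact (key _ (by fun_prop)).neg.sub (key _ (by fun_prop))

lemma hFun_zero : hFun 0 = 1 := by
  have h : Real.logb 2 (1 / 2 : ℝ) = -1 := by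
    rw [one_div, Real.logb_inv, Real.logb_self_eq_one one_lt_two]
  norm_num [hFun, h]

lemma hFun_one : hFun 1 = 0 := by
  norm_num [hFun]

lemma gFun_mem_Icc_and_hFun_gFun {x : ℝ} (hx : x ∈ Set.Icc (0 : ℝ) 1) :
    gFun x ∈ Set.Icc (0 : ℝ) 1 ∧ hFun (gFun x) = x := by
  have hsurj : Set.Icc (0 : ℝ) 1 ⊆ hFun '' Set.Icc 0 1 := by
    simpa [hFun_zero, hFun_one] using
      intermediate_value_Icc' (zero_le_one' ℝ) continuous_hFun.continuousOn
  obtain ⟨a, ha, rfl⟩ := hsurj hx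
  exact ⟨Function.invFunOn_mem ⟨a, ha, rfl⟩, Function.invFunOn_eq ⟨a, ha, rfl⟩⟩

noncomputable def pmSign (i : Fin 2) : ℝ := if i = 0 then 1 else -1

lemma pmSign_sq (i : Fin 2) : pmSign i ^ 2 = 1 := by
  fin_cases i <;> norm_num [pmSign]

/-- Transition probabilities of the binary symmetric channel with bias `x`. -/
noncomputable def bsc (x : ℝ) (i j : Fin 2) : ℝ := if i = j then (1 + x) / 2 else (1 - x) / 2

lemma bsc_eq_pmSign (x : ℝ) (i j : Fin 2) : bsc x i j = (1 + pmSign i * pmSign j * x) / 2 := by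
  fin_cases i <;> fin_cases j <;> norm_num [bsc, pmSign]
  all_goals ring

lemma condEnt_bsc (x : ℝ) : condEnt (fun i j => bsc x i j / 2) = hFun x := by
  simp only [condEnt, hFun, bsc, Fin.sum_univ_two]
  norm_num
  ring_nf

lemma noise_eq_condEnt {d : ℕ} {ι : Type*} [Fintype ι] (M : ι → Matrix (Fin d) (Fin d) ℂ)
    (v : Fin d → Fin d → ℂ) (hv : ∀ m, ∑ a, qform (M m) (v a) = (M m).trace.re) :
    noise M v = condEnt (fun a m => 1 / (d : ℝ) * qform (M m) (v a)) := by
  rw [noise, condEnt, Finset.sum_comm]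
  simp only [← Finset.mul_sum, hv]

lemma sum_qform_basisZ (M : Matrix (Fin 2) (Fin 2) ℂ) :
    ∑ a, qform M (basisZ a) = M.trace.re := by
  simp [qform, basisZ, mulVec, dotProduct, Fin.sum_univ_two, trace_fin_two]

open scoped MatrixOrder in
lemma Matrix.PosSemidef.sqrt_eq_of_sq_eq {n 𝕜 : Type*} [Fintype n] [DecidableEq n] [RCLike 𝕜]
    {A B : Matrix n n 𝕜} (hA : A.PosSemidef) (hB : B.PosSemidef) (h : B ^ 2 = A) :
    hA.sqrt = B := by
  have hcfc : hA.sqrt = cfc Real.sqrt A := by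
    rw [hA.1.cfc_eq]
    simp [Matrix.PosSemidef.sqrt, Matrix.IsHermitian.cfc, Function.comp_def]
  rw [hcfc, ← cfcₙ_eq_cfc (hf0 := by simp), ← CFC.sqrt_eq_real_sqrt A hA.nonneg]
  exact CFC.sqrt_unique (by rw [← sq, h]) hB.nonneg

noncomputable def blochYZ (x y z : ℝ) : Matrix (Fin 2) (Fin 2) ℂ :=
  (x : ℂ) • 1 + (y : ℂ) • σz + (z : ℂ) • σy

lemma blochYZ_eq (x y z : ℝ) :
    blochYZ x y z =
      !![((x + y : ℝ) : ℂ), -(z : ℂ) * Complex.I; (z : ℂ) * Complex.I, ((x - y : ℝ) : ℂ)] := by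
  ext i j
  fin_cases i <;> fin_cases j <;> simp [blochYZ, σz, σy]
  ring

lemma blochYZ_add (x y z x' y' z' : ℝ) :
    blochYZ x y z + blochYZ x' y' z' = blochYZ (x + x') (y + y') (z + z') := by
  simp only [blochYZ]
  push_cast
  module

lemma blochYZ_one_zero_zero : blochYZ 1 0 0 = 1 := by
  simp [blochYZ]

lemma blochYZ_sq (x y z : ℝ) :
    blochYZ x y z ^ 2 = blochYZ (x ^ 2 + y ^ 2 + z ^ 2) (2 * x * y) (2 * x * z) := by
  simp only [blochYZ_eq]
  ext i j
  fin_cases i <;> fin_cases j <;> simp [sq, Matrix.mul_apply] <;> ring_nf <;> simp [Complex.I_sq]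

lemma re_dotProduct_blochYZ_mulVec (x y z : ℝ) (v : Fin 2 → ℂ) :
    (star v ⬝ᵥ blochYZ x y z *ᵥ v).re =
      (x + y) * ((v 0).re ^ 2 + (v 0).im ^ 2) + (x - y) * ((v 1).re ^ 2 + (v 1).im ^ 2)
        + 2 * z * ((v 0).re * (v 1).im - (v 0).im * (v 1).re) := by
  simp [blochYZ_eq, mulVec, dotProduct]
  ring

lemma im_dotProduct_blochYZ_mulVec (x y z : ℝ) (v : Fin 2 → ℂ) :
    (star v ⬝ᵥ blochYZ x y z *ᵥ v).im = 0 := by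
  simp [blochYZ_eq, mulVec, dotProduct]
  ring

lemma blochYZ_posSemidef {x y z : ℝ} (hx : 0 ≤ x) (h : y ^ 2 + z ^ 2 ≤ x ^ 2) :
    (blochYZ x y z).PosSemidef := by
  refine .of_dotProduct_mulVec_nonneg ?_ fun v => ?_
  · rw [blochYZ_eq]
    ext i j
    fin_cases i <;> fin_cases j <;> simp [conjTranspose_apply]
  rw [Complex.nonneg_iff, im_dotProduct_blochYZ_mulVec, re_dotProduct_blochYZ_mulVec]
  refine ⟨?_, rfl⟩
  set a := (v 0).re; set b := (v 0).im; set c := (v 1).re; set d := (v 1).im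
  set Q := (x + y) * (a ^ 2 + b ^ 2) + (x - y) * (c ^ 2 + d ^ 2) + 2 * z * (a * d - b * c)
  have hsos : 2 * x * Q = ((x + y) * a + z * d) ^ 2 + ((x + y) * b - z * c) ^ 2
      + ((x - y) * c - z * b) ^ 2 + ((x - y) * d + z * a) ^ 2
      + (x ^ 2 - y ^ 2 - z ^ 2) * (a ^ 2 + b ^ 2 + c ^ 2 + d ^ 2) := by ring
  rcases hx.eq_or_lt with rfl | hx
  · have hy : y = 0 := by nlinarith
    have hz : z = 0 := by nlinarith
    simp [Q, hy, hz]
  · nlinarith [mul_nonneg (sub_nonneg.2 h) (by positivity : 0 ≤ a ^ 2 + b ^ 2 + c ^ 2 + d ^ 2)]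

lemma qform_blochYZ_basisZ (x y z : ℝ) (a : Fin 2) :
    qform (blochYZ x y z) (basisZ a) = x + pmSign a * y := by
  fin_cases a <;> simp [qform, basisZ, blochYZ_eq, pmSign, mulVec, dotProduct]
  ring

lemma norm_sq_basisX_blochYZ (x y z : ℝ) (b b' : Fin 2) :
    ‖star (basisX b') ⬝ᵥ blochYZ x y z *ᵥ basisX b‖ ^ 2 =
      if b = b' then x ^ 2 else y ^ 2 + z ^ 2 := by
  have h2 : √2 ^ 4 = 4 := by
    rw [show 4 = 2 * 2 from rfl, pow_mul, Real.sq_sqrt zero_le_two]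
    norm_num
  fin_cases b <;> fin_cases b' <;>
    simp [basisX, blochYZ_eq, mulVec, dotProduct, Complex.sq_norm, Complex.normSq_apply] <;>
    ring_nf <;> simp [h2] <;> ring

lemma sqrt_eq_blochYZ {M : Matrix (Fin 2) (Fin 2) ℂ} (hM : M.PosSemidef) {A C G : ℝ} (hG : 0 ≤ G)
    (hACG : A ^ 2 + C ^ 2 + G ^ 2 = 1) (hMeq : M = blochYZ (1 / 2) (A / 2) (C / 2)) :
    hM.sqrt = blochYZ (√(1 + G) / 2) (A / (2 * √(1 + G))) (C / (2 * √(1 + G))) := by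
  have hr2 : √(1 + G) ^ 2 = 1 + G := Real.sq_sqrt (by linarith)
  refine hM.sqrt_eq_of_sq_eq (blochYZ_posSemidef (by positivity) ?_) ?_
  · have hgap : (√(1 + G) / 2) ^ 2 - ((A / (2 * √(1 + G))) ^ 2 + (C / (2 * √(1 + G))) ^ 2)
        = G / 2 := by
      field_simp
      linear_combination (√(1 + G) ^ 2 + 1 - G) * hr2 - hACG
    linarith [div_nonneg hG zero_le_two]
  · rw [blochYZ_sq, hMeq]
    congr 1 <;> field_simp
    linear_combination (√(1 + G) ^ 2 + G - 1) * hr2 + hACG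

lemma norm_sq_basisX_sqrt {M : Matrix (Fin 2) (Fin 2) ℂ} (hM : M.PosSemidef) {A C G : ℝ}
    (hG : 0 ≤ G) (hACG : A ^ 2 + C ^ 2 + G ^ 2 = 1) (hMeq : M = blochYZ (1 / 2) (A / 2) (C / 2))
    (b b' : Fin 2) :
    ‖star (basisX b') ⬝ᵥ hM.sqrt *ᵥ basisX b‖ ^ 2 = bsc G b b' / 2 := by
  have hr2 : √(1 + G) ^ 2 = 1 + G := Real.sq_sqrt (by linarith)
  rw [sqrt_eq_blochYZ hM hG hACG hMeq, norm_sq_basisX_blochYZ, bsc]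
  split_ifs
  · rw [div_pow, hr2]
    ring
  · field_simp
    rw [hr2]
    linear_combination hACG

/-- For `(s,t) ∈ [0,1]²` with `g(s)² + g(t)² ≤ 1`, the dichotomic POVM with elements
`M_± = (1/2)(I ± (g(s)σ_z + √(1−g(s)²−g(t)²)σ_y))` is positive semidefinite, sums to `I`,
has `N(M,σ_z) = s`, and its Lüders disturbance satisfies `D_I(M,σ_x) = t`. -/
theorem stmt_18 (s t : ℝ) (hs : s ∈ Set.Icc (0 : ℝ) 1) (ht : t ∈ Set.Icc (0 : ℝ) 1)
    (hgst : gFun s ^ 2 + gFun t ^ 2 ≤ 1)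
    (M : Fin 2 → Matrix (Fin 2) (Fin 2) ℂ)
    (hMdef : ∀ i : Fin 2, M i = (1 / 2 : ℂ) •
      (1 + (if i = 0 then 1 else -1 : ℂ) •
        ((gFun s : ℂ) • σz + ((Real.sqrt (1 - gFun s ^ 2 - gFun t ^ 2) : ℝ) : ℂ) • σy))) :
    ∃ hPSD : ∀ i, (M i).PosSemidef,
      (∑ i, M i = 1) ∧
      noise M basisZ = s ∧
      condEnt (fun b b' : Fin 2 =>
        (1 / 2 : ℝ) * ∑ i, ‖star (basisX b') ⬝ᵥ ((hPSD i).sqrt.mulVec (basisX b))‖ ^ 2) = t := by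
  obtain ⟨-, hsA⟩ := gFun_mem_Icc_and_hFun_gFun hs
  obtain ⟨⟨hG, -⟩, htG⟩ := gFun_mem_Icc_and_hFun_gFun ht
  set A := gFun s
  set G := gFun t
  set C := √(1 - A ^ 2 - G ^ 2)
  have hACG : ∀ i, (pmSign i * A) ^ 2 + (pmSign i * C) ^ 2 + G ^ 2 = 1 := by
    intro i
    rw [mul_pow, mul_pow, pmSign_sq, Real.sq_sqrt (by linarith)]
    ring
  have hM : ∀ i, M i = blochYZ (1 / 2) (pmSign i * A / 2) (pmSign i * C / 2) := by
    intro i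
    rw [hMdef, blochYZ]
    fin_cases i <;> simp [pmSign] <;> module
  have hPSD : ∀ i, (M i).PosSemidef := fun i =>
    hM i ▸ blochYZ_posSemidef (by norm_num) (by nlinarith [hACG i, sq_nonneg G])
  refine ⟨hPSD, ?_, ?_, ?_⟩
  · rw [Fin.sum_univ_two, hM, hM, blochYZ_add, ← blochYZ_one_zero_zero]
    congr 1 <;> norm_num [pmSign] <;> ring
  · rw [noise_eq_condEnt M basisZ fun m => sum_qform_basisZ (M m), ← hsA, ← condEnt_bsc]
    congr
    ext a m
    rw [hM, qform_blochYZ_basisZ, bsc_eq_pmSign]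
    push_cast
    ring
  · rw [← htG, ← condEnt_bsc]
    congr
    ext b b'
    simp only [Fin.sum_univ_two, norm_sq_basisX_sqrt (hPSD _) hG (hACG _) (hM _)]
    ring
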